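/- Let V be a finite nonempty type with |V| ≤ n, α a linearly ordered type, and p ≥ 1 a natural number with n ≥ p + 1. Let G : ℕ → SimpleGraph V be a sequence of simple graphs on V, each having at most p connected components, and let m : ℕ → V → α satisfy m(t+1) = step(G(t), m(t)) for all t. Then, setting T = p(n − p − 1) + 1, there exists a set W of values with W ⊆ image(m(0)) and |W| ≤ p such that m(T)(v) ∈ W for every vertex v. (After p(n−p−1)+1 rounds, all processes hold values from a set of at most p initial values, achieving p-agreement.) -/

import Mathlib

open Finset in
/-- The rank of a vertex `v` under value assignment `m`: the number of distinct
values in the image of `m` that are strictly smaller than `m v`. -/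
def rk {V α : Type*} [Fintype V] [LinearOrder α] (m : V → α) (v : V) : ℕ :=
  ((univ.image m).filter (· < m v)).card

open scoped Classical in
/-- One min-update step: each vertex takes the minimum of `m` over its closed
neighborhood `{v} ∪ {u : G.Adj u v}`. -/
noncomputable def step {V α : Type*} [Fintype V] [LinearOrder α]
    (G : SimpleGraph V) (m : V → α) (v : V) : α :=
  (insert v (Finset.univ.filter (fun u => G.Adj u v))).inf'
    (Finset.insert_nonempty _ _) m

/-- The potential function `Φ_k(m) = Σ_v (k - r_m(v))` (truncated subtraction). -/
def Phi {V α : Type*} [Fintype V] [LinearOrder α] (k : ℕ) (m : V → α) : ℕ :=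
  ∑ v, (k - rk m v)

/-!
Rank the vertices by `rk m v`, the number of current values below `m v`, and consider the
potential `Phi p m = ∑ v, (p - rk m v)`. A min-update never raises a rank. While at least
`p + 1` values survive, some edge joins a vertex `u` of rank `< p` to a vertex of larger rank:
otherwise `min (rk m ·) p` would be constant along edges, hence on components, and would take
`p + 1` different values on at most `p` components. Across that edge the larger rank drops to
at most `rk m u < p`, so `Phi p` strictly increases. On the other hand, while `p + 1` values
survive, vertices of ranks `0, …, p` exist, which pins `Phi p` in an interval of length
`p * (|V| - p - 1)`; so this cannot last for `p * (n - p - 1) + 1` rounds.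
-/

open Finset

theorem SimpleGraph.Reachable.eq_of_forall_adj {V β : Type*} {G : SimpleGraph V} {f : V → β}
    (hf : ∀ u v, G.Adj u v → f u = f v) {u v : V} (h : G.Reachable u v) : f u = f v := by
  obtain ⟨w⟩ := h
  induction w with
  | nil => rfl
  | cons huv _ ih => exact (hf _ _ huv).trans ih

section Rank

variable {V α : Type*} [Fintype V] [LinearOrder α]

theorem exists_rk_eq (m : V → α) {j : ℕ} (hj : j < #(univ.image m)) : ∃ v, rk m v = j := by
  set s := univ.image m
  have hmono : StrictMonoOn (fun x => #(s.filter (· < x))) s := by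
    intro x hx y _ hxy
    refine card_lt_card ((ssubset_iff_of_subset fun z hz => ?_).2 ⟨x, ?_, ?_⟩)
    · simp only [mem_filter] at hz ⊢
      exact ⟨hz.1, hz.2.trans hxy⟩
    · exact mem_filter.2 ⟨hx, hxy⟩
    · simp
  have himage : s.image (fun x => #(s.filter (· < x))) = range #s := by
    refine eq_of_subset_of_card_le (fun i hi => ?_) ?_
    · obtain ⟨x, hx, rfl⟩ := mem_image.1 hi
      exact mem_range.2 (card_lt_card (filter_ssubset.2 ⟨x, hx, lt_irrefl x⟩))
    · rw [card_range, card_image_of_injOn hmono.injOn]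
  obtain ⟨x, hx, hxj⟩ := mem_image.1 (himage ▸ mem_range.2 hj)
  obtain ⟨v, -, rfl⟩ := mem_image.1 hx
  exact ⟨v, hxj⟩

theorem rk_le_rk_of_image_subset {m m' : V → α} {u v : V}
    (himage : univ.image m' ⊆ univ.image m) (hle : m' v ≤ m u) : rk m' v ≤ rk m u :=
  card_le_card fun x hx => by
    simp only [mem_filter] at hx ⊢
    exact ⟨himage hx.1, hx.2.trans_le hle⟩

end Rank

section Step

variable {V α : Type*} [Fintype V] [LinearOrder α] (G : SimpleGraph V) (m : V → α)

theorem step_le_self (v : V) : step G m v ≤ m v := by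
  classical
  exact inf'_le _ (mem_insert_self _ _)

theorem step_le_of_adj {u v : V} (h : G.Adj u v) : step G m v ≤ m u := by
  classical
  exact inf'_le m (mem_insert_of_mem (by simpa using h))

theorem exists_step_eq (v : V) : ∃ u, step G m v = m u := by
  classical
  obtain ⟨u, -, hu⟩ :=
    exists_mem_eq_inf' (s := insert v (univ.filter (G.Adj · v))) (insert_nonempty _ _) m
  exact ⟨u, hu⟩

theorem image_step_subset : univ.image (step G m) ⊆ univ.image m := by
  intro x hx
  obtain ⟨v, -, rfl⟩ := mem_image.1 hx
  obtain ⟨u, hu⟩ := exists_step_eq G m v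
  exact hu ▸ mem_image_of_mem m (mem_univ u)

theorem rk_step_le_self (v : V) : rk (step G m) v ≤ rk m v :=
  rk_le_rk_of_image_subset (image_step_subset G m) (step_le_self G m v)

theorem rk_step_le_of_adj {u v : V} (h : G.Adj u v) : rk (step G m) v ≤ rk m u :=
  rk_le_rk_of_image_subset (image_step_subset G m) (step_le_of_adj G m h)

end Step

section Potential

variable {V α : Type*} [Fintype V] [LinearOrder α]

theorem exists_adj_rk_lt (G : SimpleGraph V) (m : V → α) {p : ℕ}
    (hG : Nat.card G.ConnectedComponent ≤ p) (hd : p + 1 ≤ #(univ.image m)) :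
    ∃ u v, G.Adj u v ∧ rk m u < p ∧ rk m u < rk m v := by
  by_contra! h
  have hadj : ∀ u v, G.Adj u v → min (rk m u) p = min (rk m v) p := by
    intro u v huv
    have huv' := h u v huv
    have hvu := h v u huv.symm
    omega
  choose w hw using fun j : Fin (p + 1) => exists_rk_eq m (j.2.trans_le hd)
  have hinj : Function.Injective fun j => G.connectedComponentMk (w j) := by
    intro i j hij
    have hij' := (SimpleGraph.ConnectedComponent.exact hij).eq_of_forall_adj hadj
    simp only [hw] at hij'
    omega
  have hcomp := Nat.card_le_card_of_injective _ hinj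
  rw [Nat.card_fin] at hcomp
  omega

theorem Phi_lt_Phi_step (G : SimpleGraph V) (m : V → α) {p : ℕ}
    (hG : Nat.card G.ConnectedComponent ≤ p) (hd : p + 1 ≤ #(univ.image m)) :
    Phi p m < Phi p (step G m) := by
  obtain ⟨u, v, huv, hu, hlt⟩ := exists_adj_rk_lt G m hG hd
  refine sum_lt_sum (fun w _ => Nat.sub_le_sub_left (rk_step_le_self G m w) p)
    ⟨v, mem_univ v, ?_⟩
  have hv := rk_step_le_of_adj G m huv
  omega

theorem Phi_mem_Icc (m : V → α) {k : ℕ} (hd : k + 1 ≤ #(univ.image m)) :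
    Phi k m ∈ Set.Icc (∑ j ∈ range (k + 1), (k - j))
      (∑ j ∈ range (k + 1), (k - j) + k * (Fintype.card V - (k + 1))) := by
  classical
  choose w hw using fun j : Fin (k + 1) => exists_rk_eq m (j.2.trans_le hd)
  have hw_inj : Function.Injective w := fun i j hij => Fin.ext (by rw [← hw i, ← hw j, hij])
  set R := univ.image w
  have hR : ∑ v ∈ R, (k - rk m v) = ∑ j ∈ range (k + 1), (k - j) := by
    rw [sum_image fun _ _ _ _ h => hw_inj h, ← Fin.sum_univ_eq_sum_range]
    simp only [hw]
  have hRc : #Rᶜ = Fintype.card V - (k + 1) := by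
    rw [card_compl, card_image_of_injective _ hw_inj, card_univ, Fintype.card_fin]
  have hrest : ∑ v ∈ Rᶜ, (k - rk m v) ≤ k * (Fintype.card V - (k + 1)) := by
    simpa [hRc, mul_comm] using sum_le_card_nsmul Rᶜ (fun v => k - rk m v) k (by simp)
  have hsplit := sum_add_sum_compl R fun v => k - rk m v
  unfold Phi
  constructor <;> omega

end Potential

section Dynamics

variable {V α : Type*} [Fintype V] [LinearOrder α] {G : ℕ → SimpleGraph V} {m : ℕ → V → α}

theorem antitone_image_of_step (hm : ∀ t, m (t + 1) = step (G t) (m t)) :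
    Antitone fun t => univ.image (m t) :=
  antitone_nat_of_succ_le fun t => hm t ▸ image_step_subset (G t) (m t)

theorem Phi_add_le_Phi_of_step {p : ℕ} (hm : ∀ t, m (t + 1) = step (G t) (m t))
    (hG : ∀ t, Nat.card (G t).ConnectedComponent ≤ p) {T : ℕ}
    (hd : p + 1 ≤ #(univ.image (m T))) : Phi p (m 0) + T ≤ Phi p (m T) := by
  induction T with
  | zero => rfl
  | succ T ih =>
    have hdT : p + 1 ≤ #(univ.image (m T)) :=
      hd.trans (card_le_card (antitone_image_of_step hm T.le_succ))
    have hlt := Phi_lt_Phi_step (G T) (m T) (hG T) hdT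
    rw [← hm T] at hlt
    have hle := ih hdT
    omega

end Dynamics

theorem p_agreement_general {V α : Type*} [Fintype V]
    [LinearOrder α] (n p : ℕ)
    (hcard : Fintype.card V ≤ n)
    (G : ℕ → SimpleGraph V)
    (hG : ∀ t, Nat.card (G t).ConnectedComponent ≤ p)
    (m : ℕ → V → α) (hm : ∀ t, m (t + 1) = step (G t) (m t)) :
    ∃ W : Finset α, W ⊆ Finset.univ.image (m 0) ∧ W.card ≤ p ∧
      ∀ v : V, m (p * (n - p - 1) + 1) v ∈ W := by
  have hanti := antitone_image_of_step hm
  refine ⟨univ.image (m (p * (n - p - 1) + 1)), hanti (Nat.zero_le _), ?_,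
    fun v => mem_image_of_mem _ (mem_univ v)⟩
  by_contra! hT
  have hlow := (Phi_mem_Icc (m 0) (hT.trans_le (card_le_card (hanti (Nat.zero_le _))))).1
  have hup := (Phi_mem_Icc _ hT).2
  have hgrow := Phi_add_le_Phi_of_step hm hG hT
  have hVn : p * (Fintype.card V - (p + 1)) ≤ p * (n - p - 1) :=
    Nat.mul_le_mul_left _ (by omega)
  omega

/-- After `T = p(n - p - 1) + 1` rounds, all processes hold
values from a set `W` of at most `p` initial values (p-agreement). -/
theorem p_agreement {V α : Type*} [Fintype V] [Nonempty V]
    [LinearOrder α] (n p : ℕ) (hp : 1 ≤ p) (hnp : p + 1 ≤ n)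
    (hcard : Fintype.card V ≤ n)
    (G : ℕ → SimpleGraph V)
    (hG : ∀ t, Nat.card (G t).ConnectedComponent ≤ p)
    (m : ℕ → V → α) (hm : ∀ t, m (t + 1) = step (G t) (m t)) :
    ∃ W : Finset α, W ⊆ Finset.univ.image (m 0) ∧ W.card ≤ p ∧
      ∀ v : V, m (p * (n - p - 1) + 1) v ∈ W :=
  p_agreement_general n p hcard G hG m hm
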